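/- Let G_n be the straight linear 2-tree on n vertices. The resistance distance between vertices 1 and n satisfies r(1,n) = (n−1)/5 + 4F_{n-1}/(5L_{n-1}), where F_k and L_k are the k-th Fibonacci and Lucas numbers. -/

import Mathlib

/-!
Ground vertex 1 and let a unit current enter at vertex n. By the adjugate formula, the potential
at n is `det L({1,n}|{1,n}) / det L(1|1)`, and `L(1|1)` is nonsingular because the graph is
connected. Numbering the vertices `0, …, N` with `N = n - 1`, the potential is explicit,
`(v L_N + 2 F_N - 2 (-1)^v F_{N-2v}) / (5 L_N)` with Fibonacci numbers at negative indices.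
-/

/-- Adjacency of the linear k-tree band graph: `a ~ b` iff `1 ≤ |a - b| ≤ k`.
For `k = 2` this is the straight linear 2-tree. -/
def linAdj (k a b : ℕ) : Bool := decide (a ≠ b ∧ a ≤ b + k ∧ b ≤ a + k)

/-- Graph Laplacian of the graph on `n` vertices with adjacency `adj`. -/
def lapl (n : ℕ) (adj : ℕ → ℕ → Bool) : Matrix (Fin n) (Fin n) ℚ :=
  fun i j =>
    if i = j then ((Finset.univ.filter (fun l : Fin n => adj i.val l.val = true)).card : ℚ)
    else if adj i.val j.val then -1 else 0

/-- Delete the first and last row and column. -/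
def delFirstLast {n : ℕ} (M : Matrix (Fin n) (Fin n) ℚ) :
    Matrix (Fin (n - 2)) (Fin (n - 2)) ℚ :=
  M.submatrix (fun i => ⟨i.val + 1, by have := i.isLt; omega⟩)
    (fun j => ⟨j.val + 1, by have := j.isLt; omega⟩)

/-- Delete the first row and column. -/
def delFirst {n : ℕ} (M : Matrix (Fin n) (Fin n) ℚ) :
    Matrix (Fin (n - 1)) (Fin (n - 1)) ℚ :=
  M.submatrix (fun i => ⟨i.val + 1, by have := i.isLt; omega⟩)
    (fun j => ⟨j.val + 1, by have := j.isLt; omega⟩)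

/-- Lucas numbers: `L_0 = 2, L_1 = 1, L_2 = 3, …`. -/
def lucas : ℕ → ℚ
  | 0 => 2
  | 1 => 1
  | n + 2 => lucas (n + 1) + lucas n

open Finset Matrix SimpleGraph

namespace Matrix

variable {R : Type*} {m : ℕ}

theorem submatrix_succ_mulVec [NonUnitalNonAssocSemiring R]
    (M : Matrix (Fin (m + 1)) (Fin (m + 1)) R) (y : Fin m → R) (i : Fin m) :
    (M.submatrix Fin.succ Fin.succ *ᵥ y) i = (M *ᵥ Fin.cons 0 y) i.succ := by
  simp [mulVec, dotProduct, Fin.sum_univ_succ]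

theorem det_submatrix_castSucc_eq_det_mul [CommRing R]
    (A : Matrix (Fin (m + 1)) (Fin (m + 1)) R) {x : Fin (m + 1) → R}
    (hx : A *ᵥ x = Pi.single (Fin.last m) 1) :
    (A.submatrix Fin.castSucc Fin.castSucc).det = A.det * x (Fin.last m) := by
  have h := congrFun (congrArg (adjugate A *ᵥ ·) hx) (Fin.last m)
  simp only [mulVec_mulVec, adjugate_mul, smul_mulVec, one_mulVec, mulVec_single_one] at h
  rw [← smul_eq_mul, ← Pi.smul_apply, h, col_apply, adjugate_fin_succ_eq_det_submatrix,
    Fin.succAbove_last, ← two_mul, pow_mul, neg_one_sq, one_pow, one_mul]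

end Matrix

namespace SimpleGraph

theorem lapMatrix_mulVec_apply_eq_sum_sub {V R : Type*} [Fintype V] [DecidableEq V] [CommRing R]
    (G : SimpleGraph V) [DecidableRel G.Adj] (x : V → R) (v : V) :
    (G.lapMatrix R *ᵥ x) v = ∑ u ∈ G.neighborFinset v, (x v - x u) := by
  rw [lapMatrix_mulVec_apply, sum_sub_distrib, sum_const, nsmul_eq_mul,
    card_neighborFinset_eq_degree]

theorem det_lapMatrix_submatrix_succ_ne_zero {R : Type*} [Field R] [LinearOrder R]
    [IsStrictOrderedRing R] {m : ℕ} {G : SimpleGraph (Fin (m + 1))} [DecidableRel G.Adj]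
    (hG : G.Connected) :
    ((G.lapMatrix R).submatrix Fin.succ Fin.succ).det ≠ 0 := by
  intro hdet
  obtain ⟨y, hy, hAy⟩ := exists_mulVec_eq_zero_iff.mpr hdet
  set x : Fin (m + 1) → R := Fin.cons 0 y
  have hLx (i : Fin m) : (G.lapMatrix R *ᵥ x) i.succ = 0 := by
    rw [← submatrix_succ_mulVec, hAy, Pi.zero_apply]
  have hform : toLinearMap₂' R (G.lapMatrix R) x x = 0 := by
    simp [toLinearMap₂'_apply', dotProduct, Fin.sum_univ_succ, x, hLx]
  have hadj := (lapMatrix_toLinearMap₂'_apply'_eq_zero_iff_forall_adj R G x).mp hform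
  have hreach {i j : Fin (m + 1)} (w : G.Walk i j) : x i = x j := by
    induction w with
    | nil => rfl
    | cons h _ ih => exact (hadj _ _ h).trans ih
  refine hy (funext fun i => ?_)
  simpa [x] using hreach (hG.preconnected i.succ 0).some

end SimpleGraph

def linearKTree (k n : ℕ) : SimpleGraph (Fin n) where
  Adj i j := linAdj k i j = true
  symm := ⟨fun i j h => by simp only [linAdj, decide_eq_true_eq] at h ⊢; omega⟩
  loopless := ⟨fun i h => by simp [linAdj] at h⟩

instance (k n : ℕ) : DecidableRel (linearKTree k n).Adj :=
  fun i j => inferInstanceAs (Decidable (linAdj k i j = true))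

@[simp]
theorem linearKTree_adj {k n : ℕ} {i j : Fin n} :
    (linearKTree k n).Adj i j ↔ i ≠ j ∧ (i : ℕ) ≤ j + k ∧ (j : ℕ) ≤ i + k := by
  simp [linearKTree, linAdj, Fin.val_inj]

theorem lapl_linAdj_eq_lapMatrix (k n : ℕ) :
    lapl n (linAdj k) = (linearKTree k n).lapMatrix ℚ := by
  ext i j
  by_cases hij : i = j
  · subst hij
    simp [lapl, lapMatrix, degMatrix, degree, neighborFinset_eq_filter, linAdj, Fin.val_inj]
  · simp [lapl, lapMatrix, degMatrix, adjMatrix, hij, linAdj, Fin.val_inj]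
    split_ifs <;> simp

theorem linearKTree_connected {k : ℕ} (hk : 1 ≤ k) (m : ℕ) :
    (linearKTree k (m + 1)).Connected := by
  refine (connected_iff_exists_forall_reachable _).mpr ⟨0, fun j => ?_⟩
  induction j using Fin.induction with
  | zero => rfl
  | succ i ih =>
    refine ih.trans (Adj.reachable ?_)
    simp only [linearKTree_adj, Fin.val_castSucc, Fin.val_succ, ne_eq, Fin.ext_iff]
    omega

theorem linearKTree_lapMatrix_mulVec_apply {R : Type*} [CommRing R] (k N : ℕ) (f : ℕ → R)
    (v : Fin (N + 1)) :
    ((linearKTree k (N + 1)).lapMatrix R *ᵥ fun u => f u) v =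
      ∑ u ∈ Icc (v - k : ℕ) (min (v + k) N), (f v - f u) := by
  have hnbr : (range (N + 1)).filter (fun u => (v : ℕ) ≠ u ∧ v ≤ u + k ∧ u ≤ v + k) =
      (Icc (v - k : ℕ) (min (v + k) N)).erase v := by
    ext u
    simp only [mem_filter, mem_range, mem_erase, mem_Icc]
    omega
  rw [lapMatrix_mulVec_apply_eq_sum_sub, neighborFinset_eq_filter, sum_filter]
  simp only [linearKTree_adj, ne_eq, ← Fin.val_inj]
  rw [Fin.sum_univ_eq_sum_range
      (fun u => if ¬ (v : ℕ) = u ∧ v ≤ u + k ∧ u ≤ v + k then f v - f u else 0), ← sum_filter,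
    hnbr, sum_erase _ (sub_self _)]

theorem lucas_succ (k : ℕ) : lucas (k + 1) = Nat.fib (k + 1) + 2 * Nat.fib k := by
  induction k using Nat.twoStepInduction with
  | zero => norm_num [lucas]
  | one => norm_num [lucas]
  | more k ih₀ ih₁ =>
    rw [show lucas (k + 3) = lucas (k + 2) + lucas (k + 1) from rfl, ih₀, ih₁]
    push_cast [Nat.fib_add_two]
    ring

theorem lucas_pos (k : ℕ) : 0 < lucas k := by
  cases k with
  | zero => norm_num [lucas]
  | succ k =>
    rw [lucas_succ]
    have : 0 < Nat.fib (k + 1) := Nat.fib_pos.mpr k.succ_pos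
    positivity

def alternatingFib (N v : ℕ) : ℚ := (-1) ^ v * Int.fib (N - 2 * v)

theorem alternatingFib_add_two (N v : ℕ) :
    alternatingFib N (v + 2) = -3 * alternatingFib N (v + 1) - alternatingFib N v := by
  have key (z : ℤ) : Int.fib (z + 4) = 3 * Int.fib (z + 2) - Int.fib z := by
    have := Int.fib_add_two z
    have := Int.fib_add_two (z + 1)
    have := Int.fib_add_two (z + 2)
    ring_nf at *
    linarith
  have hz := key (N - 2 * (v + 2))
  rw [show (N : ℤ) - 2 * (v + 2) + 4 = N - 2 * v by ring,
    show (N : ℤ) - 2 * (v + 2) + 2 = N - 2 * (v + 1) by ring] at hz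
  simp only [alternatingFib, pow_succ]
  push_cast
  rw [hz]
  push_cast
  ring

theorem alternatingFib_zero (N : ℕ) : alternatingFib N 0 = Nat.fib N := by
  simp [alternatingFib]

theorem alternatingFib_one (k : ℕ) : alternatingFib (k + 2) 1 = -Nat.fib k := by
  rw [alternatingFib, show ((k + 2 : ℕ) : ℤ) - 2 * (1 : ℕ) = k by push_cast; ring,
    Int.fib_natCast]
  simp

theorem alternatingFib_self (N : ℕ) : alternatingFib N N = -Nat.fib N := by
  rw [alternatingFib, show (N : ℤ) - 2 * N = -N by ring, Int.fib_neg_natCast]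
  push_cast
  rw [← mul_assoc, ← pow_add, show N + (N + 1) = 2 * N + 1 by ring, pow_succ, pow_mul]
  norm_num

theorem alternatingFib_pred (k : ℕ) : alternatingFib (k + 2) (k + 1) = Nat.fib k := by
  rw [alternatingFib, show ((k + 2 : ℕ) : ℤ) - 2 * (k + 1 : ℕ) = -k by push_cast; ring,
    Int.fib_neg_natCast]
  push_cast
  rw [← mul_assoc, ← pow_add, ← two_mul, pow_mul]
  norm_num

/-- Kirchhoff's law at a vertex away from both ends is a recurrence with characteristic polynomial
`(x - 1)² (x² + 3x + 1)`; of its solutions `1`, `v` and `alternatingFib N v`, this is the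
combination that also satisfies the rows of the first two and the last two vertices. -/
def scaledPotential (N v : ℕ) : ℚ := v * lucas N + 2 * Nat.fib N - 2 * alternatingFib N v

theorem scaledPotential_kirchhoff {N v : ℕ} (hN : 2 ≤ N) (hv : 1 ≤ v) (hvN : v ≤ N) :
    ∑ u ∈ Icc (v - 2) (min (v + 2) N), (scaledPotential N v - scaledPotential N u) =
      if v = N then 5 * lucas N else 0 := by
  obtain ⟨k, rfl⟩ : ∃ k, N = k + 2 := ⟨N - 2, by omega⟩
  have hrec := alternatingFib_add_two (k + 2)
  have hL : lucas (k + 2) = Nat.fib (k + 2) + 2 * Nat.fib (k + 1) := lucas_succ (k + 1)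
  have hF : (Nat.fib (k + 2) : ℚ) = Nat.fib k + Nat.fib (k + 1) := by
    exact_mod_cast Nat.fib_add_two
  have h0 := alternatingFib_zero (k + 2)
  have hself := alternatingFib_self (k + 2)
  have hpred := alternatingFib_pred k
  have hone := alternatingFib_one k
  rcases (by omega : v = k + 2 ∨ (v = k + 1 ∧ 1 ≤ k) ∨ (v = 1 ∧ k = 0) ∨ (v = 1 ∧ 1 ≤ k) ∨
      (2 ≤ v ∧ v ≤ k)) with rfl | ⟨rfl, hk⟩ | ⟨rfl, rfl⟩ | ⟨rfl, hk⟩ | ⟨h1, h2⟩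
  · rw [show k + 2 - 2 = k by omega, min_eq_right (by omega), sum_Icc_succ_top (by omega),
      sum_Icc_succ_top (by omega), Icc_self, sum_singleton, if_pos rfl]
    push_cast [scaledPotential]
    linarith [hrec k]
  · obtain ⟨j, rfl⟩ : ∃ j, k = j + 1 := ⟨k - 1, by omega⟩
    rw [show j + 1 + 1 - 2 = j by omega, min_eq_right (by omega), sum_Icc_succ_top (by omega),
      sum_Icc_succ_top (by omega), sum_Icc_succ_top (by omega), Icc_self, sum_singleton,
      if_neg (by omega)]
    push_cast [scaledPotential]
    linarith [hrec j, hrec (j + 1)]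
  · rw [show 1 - 2 = 0 by omega, min_eq_right (by omega), sum_Icc_succ_top (by omega),
      sum_Icc_succ_top (by omega), Icc_self, sum_singleton, if_neg (by omega)]
    push_cast [scaledPotential]
    linarith
  · rw [show 1 - 2 = 0 by omega, min_eq_left (by omega), sum_Icc_succ_top (by omega),
      sum_Icc_succ_top (by omega), sum_Icc_succ_top (by omega), Icc_self, sum_singleton,
      if_neg (by omega)]
    push_cast [scaledPotential]
    linarith [hrec 0, hrec 1]
  · obtain ⟨j, rfl⟩ : ∃ j, v = j + 2 := ⟨v - 2, by omega⟩
    rw [show j + 2 - 2 = j by omega, min_eq_left (by omega), sum_Icc_succ_top (by omega),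
      sum_Icc_succ_top (by omega), sum_Icc_succ_top (by omega), sum_Icc_succ_top (by omega),
      Icc_self, sum_singleton, if_neg (by omega)]
    push_cast [scaledPotential]
    linarith [hrec j, hrec (j + 1), hrec (j + 2)]

def potential (N v : ℕ) : ℚ := scaledPotential N v / (5 * lucas N)

theorem potential_zero (N : ℕ) : potential N 0 = 0 := by
  simp [potential, scaledPotential, alternatingFib_zero]

theorem potential_self (N : ℕ) : potential N N = N / 5 + 4 * Nat.fib N / (5 * lucas N) := by
  have := (lucas_pos N).ne'
  rw [potential, scaledPotential, alternatingFib_self]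
  field_simp
  ring

theorem linearKTree_lapMatrix_mulVec_potential {N : ℕ} (hN : 2 ≤ N) {v : Fin (N + 1)}
    (hv : v ≠ 0) :
    ((linearKTree 2 (N + 1)).lapMatrix ℚ *ᵥ fun u => potential N u) v =
      if (v : ℕ) = N then 1 else 0 := by
  have hL := (lucas_pos N).ne'
  rw [linearKTree_lapMatrix_mulVec_apply]
  simp only [potential, ← sub_div, ← sum_div]
  rw [scaledPotential_kirchhoff hN (Nat.one_le_iff_ne_zero.mpr (Fin.val_ne_zero_iff.mpr hv))
    (Nat.lt_succ_iff.mp v.isLt)]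
  split_ifs <;> simp [hL]

/-- For the straight linear 2-tree on `n` vertices, the resistance distance
between vertices `1` and `n`, `r(1,n) = det(L({1,n}|{1,n}))/det(L(1|1))`,
equals `(n-1)/5 + 4F_{n-1}/(5L_{n-1})`. -/
theorem stmt7 (n : ℕ) (hn : 3 ≤ n) :
    (delFirstLast (lapl n (linAdj 2))).det / (delFirst (lapl n (linAdj 2))).det =
      ((n : ℚ) - 1) / 5 + 4 * (Nat.fib (n - 1) : ℚ) / (5 * lucas (n - 1)) := by
  obtain ⟨m, rfl⟩ : ∃ m, n = m + 3 := ⟨n - 3, by omega⟩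
  set A := ((linearKTree 2 (m + 3)).lapMatrix ℚ).submatrix Fin.succ Fin.succ
  have hA : delFirst (lapl (m + 3) (linAdj 2)) = A := by rw [lapl_linAdj_eq_lapMatrix]; rfl
  have hB : delFirstLast (lapl (m + 3) (linAdj 2)) = A.submatrix Fin.castSucc Fin.castSucc := by
    rw [lapl_linAdj_eq_lapMatrix]; rfl
  have hcons : (Fin.cons 0 fun i : Fin (m + 2) => potential (m + 2) (i + 1) : Fin (m + 3) → ℚ) =
      fun u : Fin (m + 3) => potential (m + 2) u := by
    ext u
    induction u using Fin.cases <;> simp [potential_zero]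
  have hx : A *ᵥ (fun i => potential (m + 2) (i + 1)) = Pi.single (Fin.last (m + 1)) 1 := by
    ext i
    rw [submatrix_succ_mulVec, hcons, linearKTree_lapMatrix_mulVec_potential (by omega)
      (Fin.succ_ne_zero i), Pi.single_apply]
    simp [Fin.ext_iff]
  have hdet : A.det ≠ 0 :=
    det_lapMatrix_submatrix_succ_ne_zero (linearKTree_connected one_le_two _)
  rw [hA, hB, det_submatrix_castSucc_eq_det_mul A hx, mul_div_cancel_left₀ _ hdet]
  show potential (m + 2) (m + 2) = _
  rw [potential_self]
  push_cast
  ring
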